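/- Let ρ̃ > 0 and let g : 𝕋̄_ρ̃ → ℂ be a 1-periodic function, continuous on the closed strip, holomorphic and bounded on 𝕋_ρ̃. Let N ∈ ℕ, N ≥ 1, and let g̃_k = (1/N) Σ_{j=0}^{N−1} g(j/N) e^{−2πik j/N} be its discrete Fourier coefficients and ĝ_k = ∫₀¹ g(x) e^{−2πikx} dx its Fourier coefficients. Then for every integer k with −N/2 ≤ k ≤ N/2 − 1, one has |g̃_k − ĝ_k| ≤ s_N(k, ρ̃)·‖g‖_ρ̃, where s_N(k, ρ̃) = e^{−2πρ̃N}/(1 − e^{−2πρ̃N}) · (e^{2πρ̃k} + e^{−2πρ̃k}). -/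

import Mathlib

noncomputable section

/-- Open complex strip of half-width `ρ` around the real axis. -/
def stripO (ρ : ℝ) : Set ℂ := {x : ℂ | |x.im| < ρ}

/-- Closed complex strip of half-width `ρ` around the real axis. -/
def stripC (ρ : ℝ) : Set ℂ := {x : ℂ | |x.im| ≤ ρ}

/-- `f` belongs to `Per ρ`: 1-periodic, continuous on the closed strip,
holomorphic on the open strip, real on the reals is not required here. -/
structure IsPerC (ρ : ℝ) (f : ℂ → ℂ) : Prop where
  periodic : ∀ x : ℂ, f (x + 1) = f x
  contOn : ContinuousOn f (stripC ρ)
  diffOn : DifferentiableOn ℂ f (stripO ρ)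

/-- Sup norm on the strip of half-width `ρ`. -/
def perNorm (ρ : ℝ) (f : ℂ → ℂ) : ℝ :=
  sSup ((fun x => ‖f x‖) '' stripO ρ)

/-- `k`-th discrete Fourier coefficient of `g` with `N` sampling nodes `x_j = j/N`. -/
def dftCoeff (N : ℕ) (g : ℂ → ℂ) (k : ℤ) : ℂ :=
  (1 / (N : ℂ)) * ∑ j ∈ Finset.range N,
    g ((j : ℂ) / (N : ℂ)) * Complex.exp ((-2 * (Real.pi : ℂ) * Complex.I * (k : ℂ) * (j : ℂ)) / (N : ℂ))

/-- `k`-th Fourier coefficient of a 1-periodic function `g`. -/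
def fourierCoeffP (g : ℂ → ℂ) (k : ℤ) : ℂ :=
  ∫ t in (0:ℝ)..1, g (t : ℂ) * Complex.exp (-2 * (Real.pi : ℂ) * Complex.I * (k : ℂ) * (t : ℂ))

/-- The constant `s_N(k,ρ̃)` controlling the aliasing error of the `k`-th DFT coefficient. -/
def sN (N : ℕ) (k : ℤ) (ρ : ℝ) : ℝ :=
  Real.exp (-2 * Real.pi * ρ * N) / (1 - Real.exp (-2 * Real.pi * ρ * N)) *
    (Real.exp (2 * Real.pi * ρ * k) + Real.exp (-2 * Real.pi * ρ * k))

/-! Because `g` is periodic, the contour of the Fourier integral may be shifted to `Im z = σ` for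
any `|σ| < ρ`, which gives `|ĝ_n| ≤ e^{-2πρ|n|} ‖g‖_ρ`. The Fourier series of `g` therefore
converges absolutely, and sampling it at the nodes `j/N` aliases every frequency `n ≡ k (mod N)`
onto `k`: `g̃_k = ∑_m ĝ_{k+mN}`. For `|k| ≤ N` the error `∑_{m ≠ 0} ĝ_{k+mN}` is bounded by two
geometric series of ratio `e^{-2πρN}`, one for `m > 0` and one for `m < 0`. -/

open Complex Set

open scoped Real Interval

lemma fourierCoeffP_eq_integral_add_mul_I {ρ : ℝ} {g : ℂ → ℂ} (hper : ∀ z, g (z + 1) = g z)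
    (hdiff : DifferentiableOn ℂ g (stripO ρ)) {σ : ℝ} (hσ : |σ| < ρ) (n : ℤ) :
    fourierCoeffP g n =
      ∫ t in (0:ℝ)..1, g (t + σ * I) * cexp (-2 * π * I * n * (t + σ * I)) := by
  set F : ℂ → ℂ := fun z => g z * cexp (-2 * π * I * n * z)
  have hrect : ([[(0:ℝ), 1]] ×ℂ [[(0:ℝ), σ]]) ⊆ stripO ρ := fun z hz => by
    simpa [stripO] using (abs_sub_left_of_mem_uIcc hz.2).trans_lt (by simpa using hσ)
  have hF : DifferentiableOn ℂ F ([[(0:ℝ), 1]] ×ℂ [[(0:ℝ), σ]]) :=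
    (hdiff.mono hrect).mul (by fun_prop)
  have hvert : ∀ y : ℝ, F (1 + y * I) = F (y * I) := by
    intro y
    have hexp : cexp (-2 * π * I * n) = 1 := by
      rw [show -2 * π * I * n = (-n : ℤ) * (2 * π * I) by push_cast; ring]
      exact exp_int_mul_two_pi_mul_I (-n)
    simp only [F, add_comm (1 : ℂ), hper, mul_add, exp_add, hexp, mul_one]
  -- Cauchy's theorem on `[0, 1] × [0, σ]`; the vertical sides cancel by periodicity.
  have key := integral_boundary_rect_eq_zero_of_differentiableOn F 0 (1 + σ * I) (by simpa using hF)
  show ∫ t in (0:ℝ)..1, F t = ∫ t in (0:ℝ)..1, F (t + σ * I)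
  simpa [hvert, sub_eq_zero] using key

lemma norm_fourierCoeffP_le_of_abs_lt {ρ M : ℝ} {g : ℂ → ℂ} (hper : ∀ z, g (z + 1) = g z)
    (hdiff : DifferentiableOn ℂ g (stripO ρ)) (hM : ∀ z ∈ stripO ρ, ‖g z‖ ≤ M)
    {σ : ℝ} (hσ : |σ| < ρ) (n : ℤ) :
    ‖fourierCoeffP g n‖ ≤ Real.exp (2 * π * n * σ) * M := by
  have hbound : ∀ t : ℝ, ‖g (t + σ * I) * cexp (-2 * π * I * n * (t + σ * I))‖ ≤
      Real.exp (2 * π * n * σ) * M := fun t => by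
    rw [norm_mul, norm_exp, mul_comm]
    gcongr
    · simp
    · exact hM _ (by simpa [stripO] using hσ)
  rw [fourierCoeffP_eq_integral_add_mul_I hper hdiff hσ]
  simpa using
    intervalIntegral.norm_integral_le_of_norm_le_const (a := 0) (b := 1) fun t _ => hbound t

lemma norm_fourierCoeffP_le {ρ M : ℝ} {g : ℂ → ℂ} (hρ : 0 < ρ) (hper : ∀ z, g (z + 1) = g z)
    (hdiff : DifferentiableOn ℂ g (stripO ρ)) (hM : ∀ z ∈ stripO ρ, ‖g z‖ ≤ M) (n : ℤ) :
    ‖fourierCoeffP g n‖ ≤ Real.exp (-(2 * π * ρ) * |(n : ℝ)|) * M := by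
  set S := {σ : ℝ | ‖fourierCoeffP g n‖ ≤ Real.exp (2 * π * n * σ) * M}
  have hIcc : Icc (-ρ) ρ ⊆ S := by
    rw [← closure_Ioo (by linarith)]
    refine closure_minimal (fun σ hσ => ?_) (isClosed_le continuous_const (by fun_prop))
    exact norm_fourierCoeffP_le_of_abs_lt hper hdiff hM (abs_lt.mpr hσ) n
  rcases le_total 0 (n : ℝ) with hn | hn
  · have h : ‖fourierCoeffP g n‖ ≤ Real.exp (2 * π * n * -ρ) * M := hIcc ⟨le_rfl, by linarith⟩
    rwa [abs_of_nonneg hn, show -(2 * π * ρ) * n = 2 * π * n * -ρ by ring]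
  · have h : ‖fourierCoeffP g n‖ ≤ Real.exp (2 * π * n * ρ) * M := hIcc ⟨by linarith, le_rfl⟩
    rwa [abs_of_nonpos hn, show -(2 * π * ρ) * -n = 2 * π * n * ρ by ring]

lemma hasSum_fourierCoeffP_mul_exp {g : ℂ → ℂ} (hper : Function.Periodic (fun t : ℝ => g t) 1)
    (hcont : Continuous fun t : ℝ => g t) (hsum : Summable (fourierCoeffP g)) (t : ℝ) :
    HasSum (fun n : ℤ => fourierCoeffP g n * cexp (2 * π * I * n * t)) (g t) := by
  have : Fact (0 < (1 : ℝ)) := ⟨one_pos⟩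
  let f : C(AddCircle (1 : ℝ), ℂ) := ⟨hper.lift, continuous_coinduced_dom.mpr hcont⟩
  have hf : ∀ x : ℝ, f x = g x := fun x => rfl
  have hfourier : ∀ (n : ℤ) (x : ℝ), fourier n (x : AddCircle (1 : ℝ)) = cexp (2 * π * I * n * x) :=
    fun n x => by rw [fourier_coe_apply, ofReal_one, div_one]
  have hcoeff : fourierCoeff f = fourierCoeffP g := by
    ext n
    rw [fourierCoeff_eq_intervalIntegral _ n 0, fourierCoeffP]
    simp [hf, hfourier, mul_comm]
  have := has_pointwise_sum_fourier_series_of_summable (hcoeff ▸ hsum) (t : AddCircle (1 : ℝ))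
  simpa [hcoeff, hfourier, hf, mul_comm] using this

lemma IsPrimitiveRoot.sum_range_zpow_pow {K : Type*} [Field K] {ζ : K} {N : ℕ}
    (hζ : IsPrimitiveRoot ζ N) (d : ℤ) :
    ∑ j ∈ Finset.range N, (ζ ^ d) ^ j = if (N : ℤ) ∣ d then (N : K) else 0 := by
  split_ifs with hd
  · simp [(hζ.zpow_eq_one_iff_dvd d).mpr hd]
  · have hne : ζ ^ d ≠ 1 := mt (hζ.zpow_eq_one_iff_dvd d).mp hd
    rw [geom_sum_eq hne, ← zpow_natCast, ← zpow_mul, mul_comm, zpow_mul, zpow_natCast,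
      hζ.pow_eq_one, one_zpow, sub_self, zero_div]

lemma hasSum_comp_add_mul_iff {α : Type*} [AddCommMonoid α] [TopologicalSpace α] {f : ℤ → α}
    {a : α} {N : ℤ} (hN : N ≠ 0) (k : ℤ) :
    HasSum (fun m => f (k + m * N)) a ↔ HasSum (fun n => if N ∣ n - k then f n else 0) a := by
  have hinj : Function.Injective fun m : ℤ => k + m * N := fun m m' h => by
    simpa [hN] using h
  have hsupp : ∀ n ∉ Set.range fun m : ℤ => k + m * N, (if N ∣ n - k then f n else 0) = 0 := by
    rintro n hn
    rw [if_neg]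
    rintro ⟨m, hm⟩
    exact hn ⟨m, by linear_combination -hm⟩
  rw [← hinj.hasSum_iff hsupp]
  simp only [Function.comp_def, add_sub_cancel_left, dvd_mul_left, if_true]

lemma hasSum_dftCoeff {N : ℕ} (hN : N ≠ 0) {g : ℂ → ℂ} {c : ℤ → ℂ}
    (hg : ∀ t : ℝ, HasSum (fun n : ℤ => c n * cexp (2 * π * I * n * t)) (g t)) (k : ℤ) :
    HasSum (fun m : ℤ => c (k + m * N)) (dftCoeff N g k) := by
  set ζ := cexp (2 * π * I / N)
  have hζ : IsPrimitiveRoot ζ N := isPrimitiveRoot_exp N hN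
  have hexp : ∀ (n : ℤ) (j : ℕ),
      cexp (2 * π * I * n * ((j / N : ℝ) : ℂ)) * cexp (-2 * π * I * k * j / N) =
        (ζ ^ (n - k)) ^ j := by
    intro n j
    rw [← zpow_natCast, ← zpow_mul, ← exp_int_mul, ← exp_add]
    congr 1
    push_cast
    field_simp
    ring
  have hsum := (hasSum_sum (s := Finset.range N) fun (j : ℕ) _ =>
    (hg (j / N)).mul_right (cexp (-2 * π * I * k * j / N))).mul_left (1 / (N : ℂ))
  have hterms : (fun n => (1 / N : ℂ) * ∑ j ∈ Finset.range N,
      c n * cexp (2 * π * I * n * ((j / N : ℝ) : ℂ)) * cexp (-2 * π * I * k * j / N)) =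
      fun n => if (N : ℤ) ∣ n - k then c n else 0 := by
    ext n
    simp only [mul_assoc (c n), hexp]
    rw [← Finset.mul_sum, hζ.sum_range_zpow_pow]
    split_ifs
    · field_simp
    · simp
  have hdft : dftCoeff N g k = (1 / N : ℂ) * ∑ j ∈ Finset.range N,
      g ((j / N : ℝ) : ℂ) * cexp (-2 * π * I * k * j / N) := by
    simp only [dftCoeff]
    push_cast
    rfl
  rw [hterms, ← hdft] at hsum
  exact (hasSum_comp_add_mul_iff (Int.natCast_ne_zero.mpr hN) k).mpr hsum

lemma hasSum_exp_neg_mul_abs_add_succ_mul {a L c : ℝ} (ha : 0 < a) (hL : 0 < L) (hc : -L ≤ c) :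
    HasSum (fun n : ℕ => Real.exp (-a * |c + (n + 1) * L|))
      (Real.exp (-a * c) * (Real.exp (-a * L) / (1 - Real.exp (-a * L)))) := by
  have hq : Real.exp (-a * L) < 1 := Real.exp_lt_one_iff.mpr (by nlinarith)
  have hterm : ∀ n : ℕ, Real.exp (-a * |c + (n + 1) * L|) =
      Real.exp (-a * c) * Real.exp (-a * L) * Real.exp (-a * L) ^ n := by
    intro n
    rw [abs_of_nonneg (by nlinarith [n.cast_nonneg (α := ℝ)]), ← Real.exp_nat_mul,
      ← Real.exp_add, ← Real.exp_add]
    ring_nf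
  have h := (hasSum_geometric_of_lt_one (Real.exp_pos _).le hq).mul_left
    (Real.exp (-a * c) * Real.exp (-a * L))
  rw [← div_eq_mul_inv, mul_div_assoc] at h
  exact h.congr_fun hterm

lemma hasSum_update_exp_neg_mul_abs_add_mul {a L c : ℝ} (ha : 0 < a) (hL : 0 < L) (hc : |c| ≤ L) :
    HasSum (Function.update (fun m : ℤ => Real.exp (-a * |c + m * L|)) 0 0)
      (Real.exp (-a * L) / (1 - Real.exp (-a * L)) * (Real.exp (a * c) + Real.exp (-a * c))) := by
  obtain ⟨hc₁, hc₂⟩ := abs_le.mp hc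
  set F := Function.update (fun m : ℤ => Real.exp (-a * |c + m * L|)) 0 0
  have hF₀ : F 0 = 0 := Function.update_self ..
  have hF : ∀ m ≠ 0, F m = Real.exp (-a * |c + m * L|) := fun m hm => Function.update_of_ne hm ..
  have hpos : HasSum (fun n : ℕ => F n)
      (Real.exp (-a * c) * (Real.exp (-a * L) / (1 - Real.exp (-a * L)))) := by
    refine (hasSum_nat_add_iff' 1).mp ?_
    rw [Finset.sum_range_one, Nat.cast_zero, hF₀, sub_zero]
    refine (hasSum_exp_neg_mul_abs_add_succ_mul ha hL hc₁).congr_fun fun n => ?_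
    rw [hF _ (by omega)]
    push_cast
    rfl
  have hneg : HasSum (fun n : ℕ => F (-(n + 1)))
      (Real.exp (a * c) * (Real.exp (-a * L) / (1 - Real.exp (-a * L)))) := by
    have h := hasSum_exp_neg_mul_abs_add_succ_mul ha hL (c := -c) (by linarith)
    rw [neg_mul_neg] at h
    refine h.congr_fun fun n => ?_
    rw [hF _ (by omega), ← abs_neg]
    push_cast
    ring_nf
  rw [show Real.exp (-a * L) / (1 - Real.exp (-a * L)) * (Real.exp (a * c) + Real.exp (-a * c)) =
    Real.exp (-a * c) * (Real.exp (-a * L) / (1 - Real.exp (-a * L))) +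
      Real.exp (a * c) * (Real.exp (-a * L) / (1 - Real.exp (-a * L))) by ring]
  exact hpos.of_nat_of_neg_add_one hneg

theorem dft_coeff_error_general (ρt : ℝ) (hρt : 0 < ρt) (g : ℂ → ℂ) (hg : IsPerC ρt g)
    (hb : BddAbove ((fun x => ‖g x‖) '' stripO ρt))
    (N : ℕ) (k : ℤ) (hk1 : -(N : ℤ) ≤ 2 * k) (hk2 : 2 * k ≤ (N : ℤ) - 2) :
    ‖dftCoeff N g k - fourierCoeffP g k‖ ≤ sN N k ρt * perNorm ρt g := by
  set M := perNorm ρt g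
  have hN : N ≠ 0 := by omega
  have ha : 0 < 2 * π * ρt := by positivity
  have hdecay := norm_fourierCoeffP_le hρt hg.periodic hg.diffOn
    (M := M) fun z hz => le_csSup hb ⟨z, hz, rfl⟩
  have hsum : Summable (fourierCoeffP g) := by
    refine .of_norm_bounded_eventually
      (((hasSum_update_exp_neg_mul_abs_add_mul ha one_pos (c := 0) (by simp)).summable.mul_right M))
      ((Filter.eventually_cofinite_ne 0).mono fun n hn => ?_)
    simpa [Function.update_of_ne hn] using hdecay n
  have hseries := hasSum_fourierCoeffP_mul_exp (fun t => by simpa using hg.periodic t)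
    (hg.contOn.comp_continuous continuous_ofReal fun t => by simp [stripC, hρt.le]) hsum
  have halias := (hasSum_dftCoeff hN hseries k).update 0 0
  have hmajorant := (hasSum_update_exp_neg_mul_abs_add_mul ha (L := N) (c := k)
    (Nat.cast_pos.mpr hN.bot_lt) (abs_le.mpr ⟨by exact_mod_cast (by omega : -(N : ℤ) ≤ k),
      by exact_mod_cast (by omega : k ≤ N)⟩)).mul_right M
  have hbound : ∀ m, ‖Function.update (fun m => fourierCoeffP g (k + m * N)) 0 0 m‖ ≤
      Function.update (fun m : ℤ => Real.exp (-(2 * π * ρt) * |(k : ℝ) + m * N|)) 0 0 m * M := by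
    intro m
    rcases eq_or_ne m 0 with rfl | hm
    · simp
    · simpa [Function.update_of_ne hm] using hdecay (k + m * N)
  calc ‖dftCoeff N g k - fourierCoeffP g k‖
      = ‖0 - fourierCoeffP g (k + 0 * N) + dftCoeff N g k‖ := by
        rw [zero_mul, add_zero, zero_sub, neg_add_eq_sub]
    _ ≤ _ := halias.norm_le_of_bounded hmajorant hbound
    _ = sN N k ρt * M := by rw [sN]; ring_nf

/-- Control of the error between the discrete Fourier coefficients and the exact Fourier
coefficients of a bounded analytic periodic function: `|g̃_k − ĝ_k| ≤ s_N(k,ρ̃)‖g‖_ρ̃`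
for `−N/2 ≤ k ≤ N/2 − 1`. -/
theorem dft_coeff_error (ρt : ℝ) (hρt : 0 < ρt) (g : ℂ → ℂ) (hg : IsPerC ρt g)
    (hb : BddAbove ((fun x => ‖g x‖) '' stripO ρt))
    (N : ℕ) (hN : 1 ≤ N) (k : ℤ) (hk1 : -(N : ℤ) ≤ 2 * k) (hk2 : 2 * k ≤ (N : ℤ) - 2) :
    ‖dftCoeff N g k - fourierCoeffP g k‖ ≤ sN N k ρt * perNorm ρt g :=
  dft_coeff_error_general ρt hρt g hg hb N k hk1 hk2
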